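/- arXiv:2309.01764 — 3 statements merged into one kernel-verified Lean document; each statement's English description precedes it below -/
import Mathlib

section
/- Suppose L is convex with subgradient g at θ*, and L satisfies RSC at θ* with radius η, curvature κ > 0 and tolerance τ². Suppose Φ*(g) ≤ (κ/2)·√a for some a > 0, 8τ²ψ² ≤ κ, and 4√(aψ²) ≤ η for some ψ > 0. Then every θ ∈ Ω with ‖θ − θ*‖ > η and Φ(θ − θ*) ≤ 2ψ·‖θ − θ*‖ satisfies L(θ) − L(θ*) ≥ κη²/4. -/
noncomputable section

open RealInnerProductSpace

variable {Ω : Type*} [NormedAddCommGroup Ω] [InnerProductSpace ℝ Ω] [FiniteDimensional ℝ Ω]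

/-- Dual norm `Φ*(v) = sup {⟨u, v⟩ : Φ(u) ≤ 1}`. -/
def dualNorm (Φ : Ω → ℝ) (v : Ω) : ℝ :=
  sSup {r : ℝ | ∃ u : Ω, Φ u ≤ 1 ∧ r = ⟪u, v⟫}

/-- Subspace compatibility constant `Ψ(M) = sup {Φ(u)/‖u‖ : u ∈ M, u ≠ 0}`
(`= 0` for `M = ⊥`, since `sSup ∅ = 0` in `ℝ`). -/
def compatConst (Φ : Ω → ℝ) (M : Submodule ℝ Ω) : ℝ :=
  sSup {r : ℝ | ∃ u ∈ M, u ≠ 0 ∧ r = Φ u / ‖u‖}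

/-- `Φ` is a norm on `Ω`. -/
def IsNormFn (Φ : Ω → ℝ) : Prop :=
  (∀ u v : Ω, Φ (u + v) ≤ Φ u + Φ v) ∧ (∀ (c : ℝ) (u : Ω), Φ (c • u) = |c| * Φ u) ∧
  (∀ u : Ω, Φ u = 0 ↔ u = 0)

/-- `Φ` is decomposable with respect to the pair `(M, M̄ᗮ)`. -/
def Decomposable (Φ : Ω → ℝ) (M Mbar : Submodule ℝ Ω) : Prop :=
  ∀ θ ∈ M, ∀ γ ∈ Mbarᗮ, Φ (θ + γ) = Φ θ + Φ γ

/-- `g` is a subgradient of `L` at `θs`. -/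
def IsSubgradientAt (L : Ω → ℝ) (g θs : Ω) : Prop :=
  ∀ θ : Ω, L θ ≥ L θs + ⟪g, θ - θs⟫

/-- Restricted strong convexity of `L` at `θs` (subgradient `g`) with radius `η`,
curvature `κ` and tolerance `τ2`. -/
def RSC (L Φ : Ω → ℝ) (θs g : Ω) (η κ τ2 : ℝ) : Prop :=
  ∀ Δ : Ω, ‖Δ‖ ≤ η → L (θs + Δ) - L θs - ⟪g, Δ⟫ ≥ κ * ‖Δ‖ ^ 2 - τ2 * Φ Δ ^ 2

namespace Aux

lemma normfn_zero (Φ : Ω → ℝ) (hΦ : IsNormFn Φ) : Φ 0 = 0 := (hΦ.2.2 0).2 rfl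

lemma normfn_neg (Φ : Ω → ℝ) (hΦ : IsNormFn Φ) (u : Ω) : Φ (-u) = Φ u := by
  have := hΦ.2.1 (-1) u
  simpa using this

lemma normfn_nonneg (Φ : Ω → ℝ) (hΦ : IsNormFn Φ) (u : Ω) : 0 ≤ Φ u := by
  have h := hΦ.1 u (-u)
  rw [add_neg_cancel, normfn_zero Φ hΦ, normfn_neg Φ hΦ] at h
  linarith

/-- Φ is bounded above by the ambient norm. -/
lemma normfn_le_const_mul_norm (Φ : Ω → ℝ) (hΦ : IsNormFn Φ) :
    ∃ C : ℝ, 0 < C ∧ ∀ u : Ω, Φ u ≤ C * ‖u‖ := by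
  classical
  set b := Module.finBasis ℝ Ω with hb
  set n := Module.finrank ℝ Ω
  set D := ∑ i, Φ (b i) with hD
  have hD0 : 0 ≤ D := Finset.sum_nonneg fun i _ => normfn_nonneg Φ hΦ _
  refine ⟨(D * ‖(b.equivFunL : Ω →L[ℝ] (Fin n → ℝ))‖) + 1, by positivity, fun u => ?_⟩
  have hrepr : u = ∑ i, b.repr u i • b i := (b.sum_repr u).symm
  have h1 : Φ u ≤ ∑ i, |b.repr u i| * Φ (b i) := by
    calc Φ u = Φ (∑ i, b.repr u i • b i) := by rw [← hrepr]
      _ ≤ ∑ i, Φ (b.repr u i • b i) :=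
          Finset.le_sum_of_subadditive Φ (normfn_zero Φ hΦ).le hΦ.1 _ _
      _ = ∑ i, |b.repr u i| * Φ (b i) := by
          refine Finset.sum_congr rfl fun i _ => hΦ.2.1 _ _
  have h2 : ∀ i, |b.repr u i| ≤ ‖(b.equivFunL : Ω →L[ℝ] (Fin n → ℝ))‖ * ‖u‖ := by
    intro i
    have : |b.repr u i| ≤ ‖(b.equivFunL : Ω →L[ℝ] (Fin n → ℝ)) u‖ := by
      have := norm_le_pi_norm ((b.equivFunL : Ω →L[ℝ] (Fin n → ℝ)) u) i
      simpa [Real.norm_eq_abs] using this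
    exact this.trans ((b.equivFunL : Ω →L[ℝ] (Fin n → ℝ)).le_opNorm u)
  have h3 : ∑ i, |b.repr u i| * Φ (b i) ≤ D * (‖(b.equivFunL : Ω →L[ℝ] (Fin n → ℝ))‖ * ‖u‖) := by
    rw [hD, Finset.sum_mul]
    refine Finset.sum_le_sum fun i _ => ?_
    rw [mul_comm (Φ (b i))]
    exact mul_le_mul_of_nonneg_right (h2 i) (normfn_nonneg Φ hΦ _)
  have : Φ u ≤ D * ‖(b.equivFunL : Ω →L[ℝ] (Fin n → ℝ))‖ * ‖u‖ := by
    rw [mul_assoc]; exact h1.trans h3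
  nlinarith [norm_nonneg u]

lemma normfn_continuous (Φ : Ω → ℝ) (hΦ : IsNormFn Φ) : Continuous Φ := by
  obtain ⟨C, hC0, hC⟩ := normfn_le_const_mul_norm Φ hΦ
  have : LipschitzWith (Real.toNNReal C) Φ := by
    refine LipschitzWith.of_dist_le_mul fun x y => ?_
    have h1 : Φ x ≤ Φ y + Φ (x - y) := by
      have := hΦ.1 (x - y) y
      have e : x - y + y = x := by abel
      rw [e] at this; linarith
    have h2 : Φ y ≤ Φ x + Φ (x - y) := by
      have := hΦ.1 (y - x) x
      have hn : Φ (y - x) = Φ (x - y) := by rw [← normfn_neg Φ hΦ (x - y), neg_sub]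
      have e : y - x + x = y := by abel
      rw [e, hn] at this; linarith
    have hd : dist (Φ x) (Φ y) ≤ Φ (x - y) := by
      rw [Real.dist_eq]; rw [abs_le]; constructor <;> linarith
    refine hd.trans ?_
    have := hC (x - y)
    rw [Real.coe_toNNReal C hC0.le, dist_eq_norm]
    linarith
  exact this.continuous

/-- The ambient norm is bounded above by Φ. -/
lemma norm_le_const_mul_normfn (Φ : Ω → ℝ) (hΦ : IsNormFn Φ) :
    ∃ c : ℝ, 0 < c ∧ ∀ u : Ω, ‖u‖ ≤ c * Φ u := by
  by_cases htriv : ∀ u : Ω, u = 0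
  · exact ⟨1, one_pos, fun u => by simp [htriv u, normfn_zero Φ hΦ]⟩
  push_neg at htriv
  obtain ⟨v, hv⟩ := htriv
  have hsne : (Metric.sphere (0 : Ω) 1).Nonempty := ⟨‖v‖⁻¹ • v, by
    simp [norm_smul, abs_of_nonneg (inv_nonneg.2 (norm_nonneg v)),
      inv_mul_cancel₀ (norm_ne_zero_iff.2 hv)]⟩
  obtain ⟨x₀, hx₀mem, hx₀min⟩ := (isCompact_sphere (0 : Ω) 1).exists_isMinOn hsne
    ((normfn_continuous Φ hΦ).continuousOn)
  have hx₀norm : ‖x₀‖ = 1 := by simpa using hx₀mem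
  have hx₀ne : x₀ ≠ 0 := by intro h; rw [h] at hx₀norm; simp at hx₀norm
  set m := Φ x₀ with hm
  have hm0 : 0 < m := lt_of_le_of_ne (normfn_nonneg Φ hΦ x₀)
    (fun h => hx₀ne ((hΦ.2.2 x₀).1 h.symm))
  refine ⟨m⁻¹, inv_pos.2 hm0, fun u => ?_⟩
  rcases eq_or_ne u 0 with rfl | hu
  · simp [normfn_zero Φ hΦ]
  have hunorm : (0:ℝ) < ‖u‖ := norm_pos_iff.2 hu
  have hmem : ‖u‖⁻¹ • u ∈ Metric.sphere (0 : Ω) 1 := by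
    simp [norm_smul, abs_of_nonneg (inv_nonneg.2 (norm_nonneg u)),
      inv_mul_cancel₀ hunorm.ne']
  have h := hx₀min hmem
  have h' : m ≤ ‖u‖⁻¹ * Φ u := by
    have := hΦ.2.1 (‖u‖⁻¹) u
    rw [abs_of_nonneg (inv_nonneg.2 (norm_nonneg u))] at this
    simpa [this] using h
  have hum : ‖u‖ * m ≤ Φ u := by
    have := mul_le_mul_of_nonneg_left h' hunorm.le
    rw [← mul_assoc, mul_inv_cancel₀ hunorm.ne', one_mul] at this
    linarith
  calc ‖u‖ = m⁻¹ * (‖u‖ * m) := by field_simp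
    _ ≤ m⁻¹ * Φ u := mul_le_mul_of_nonneg_left hum (inv_pos.2 hm0).le


lemma inner_le_dualNorm (Φ : Ω → ℝ) (hΦ : IsNormFn Φ) (g u : Ω) :
    ⟪u, g⟫ ≤ dualNorm Φ g * Φ u := by
  obtain ⟨c, hc0, hc⟩ := norm_le_const_mul_normfn Φ hΦ
  have hbdd : BddAbove {r : ℝ | ∃ w : Ω, Φ w ≤ 1 ∧ r = ⟪w, g⟫} := by
    refine ⟨c * ‖g‖, fun r hr => ?_⟩
    obtain ⟨w, hw1, rfl⟩ := hr
    calc ⟪w, g⟫ ≤ ‖w‖ * ‖g‖ := real_inner_le_norm w g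
      _ ≤ (c * Φ w) * ‖g‖ := mul_le_mul_of_nonneg_right (hc w) (norm_nonneg g)
      _ ≤ (c * 1) * ‖g‖ := by
          have := mul_le_mul_of_nonneg_left hw1 hc0.le
          exact mul_le_mul_of_nonneg_right this (norm_nonneg g)
      _ = c * ‖g‖ := by ring
  rcases eq_or_ne u 0 with rfl | hu
  · simp [normfn_zero Φ hΦ]
  have hΦu : 0 < Φ u := lt_of_le_of_ne (normfn_nonneg Φ hΦ u)
    (fun h => hu ((hΦ.2.2 u).1 h.symm))
  set w := (Φ u)⁻¹ • u with hw
  have hΦw : Φ w = 1 := by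
    rw [hw, hΦ.2.1, abs_of_nonneg (inv_nonneg.2 hΦu.le), inv_mul_cancel₀ hΦu.ne']
  have hmem : ⟪w, g⟫ ∈ {r : ℝ | ∃ w : Ω, Φ w ≤ 1 ∧ r = ⟪w, g⟫} := ⟨w, hΦw.le, rfl⟩
  have hle : ⟪w, g⟫ ≤ dualNorm Φ g := le_csSup hbdd hmem
  have hinner : ⟪w, g⟫ = (Φ u)⁻¹ * ⟪u, g⟫ := by
    rw [hw, real_inner_smul_left]
  have := mul_le_mul_of_nonneg_left hle hΦu.le
  rw [hinner, ← mul_assoc, mul_inv_cancel₀ hΦu.ne', one_mul] at this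
  linarith [this]

end Aux

/-- points outside the RSC ball whose error is compatible with the
cone `Φ(θ - θ*) ≤ 2ψ‖θ - θ*‖` have loss bounded below by `κη²/4`. -/
theorem loss_lower_bound_outside_ball
    (Φ : Ω → ℝ) (hΦ : IsNormFn Φ)
    (L : Ω → ℝ) (hLconv : ConvexOn ℝ Set.univ L)
    (θs g : Ω) (hg : IsSubgradientAt L g θs)
    (η κ τ2 : ℝ) (hη : 0 < η) (hκpos : 0 < κ) (hτ2 : 0 ≤ τ2)
    (hRSC : RSC L Φ θs g η κ τ2)
    (a : ℝ) (ha : 0 < a) (hdual : dualNorm Φ g ≤ (κ / 2) * Real.sqrt a)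
    (ψ : ℝ) (hψ : 0 < ψ)
    (hτψ : 8 * τ2 * ψ ^ 2 ≤ κ) (haψη : 4 * Real.sqrt (a * ψ ^ 2) ≤ η) :
    ∀ θ : Ω, ‖θ - θs‖ > η → Φ (θ - θs) ≤ 2 * ψ * ‖θ - θs‖ →
      L θ - L θs ≥ κ * η ^ 2 / 4 := by
  intro θ hθ hcone
  set Δ := θ - θs with hΔ
  have hΔnorm : 0 < ‖Δ‖ := lt_trans hη hθ
  set t := η / ‖Δ‖ with ht
  have ht0 : 0 < t := div_pos hη hΔnorm
  have ht1 : t < 1 := (div_lt_one hΔnorm).2 hθ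
  set Δ' := t • Δ with hΔ'
  have hΔ'norm : ‖Δ'‖ = η := by
    rw [hΔ', norm_smul, Real.norm_eq_abs, abs_of_pos ht0, ht,
      div_mul_cancel₀ _ hΔnorm.ne']
  -- convexity
  have hconv := hLconv.2 (Set.mem_univ θs) (Set.mem_univ θ)
    (by linarith : (0:ℝ) ≤ 1 - t) ht0.le (by ring)
  have hpt : (1 - t) • θs + t • θ = θs + Δ' := by
    rw [hΔ', hΔ]; module
  rw [hpt] at hconv
  have hconv' : L (θs + Δ') - L θs ≤ t * (L θ - L θs) := by
    have := hconv; simp only [smul_eq_mul] at this; nlinarith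
  -- RSC
  have hrsc := hRSC Δ' (le_of_eq hΔ'norm)
  -- Φ bound
  have hΦΔ' : Φ Δ' ≤ 2 * ψ * η := by
    rw [hΔ', hΦ.2.1, abs_of_pos ht0]
    calc t * Φ Δ ≤ t * (2 * ψ * ‖Δ‖) := mul_le_mul_of_nonneg_left hcone ht0.le
      _ = 2 * ψ * (t * ‖Δ‖) := by ring
      _ = 2 * ψ * η := by rw [ht, div_mul_cancel₀ _ hΔnorm.ne']
  have hΦΔ'0 : 0 ≤ Φ Δ' := Aux.normfn_nonneg Φ hΦ Δ'
  -- inner product bound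
  have hinner : ⟪g, Δ'⟫ ≥ -((κ / 2) * Real.sqrt a * (2 * ψ * η)) := by
    have h1 : ⟪-Δ', g⟫ ≤ dualNorm Φ g * Φ (-Δ') := Aux.inner_le_dualNorm Φ hΦ g (-Δ')
    rw [Aux.normfn_neg Φ hΦ, inner_neg_left] at h1
    have h2 : dualNorm Φ g * Φ Δ' ≤ (κ / 2) * Real.sqrt a * (2 * ψ * η) :=
      mul_le_mul hdual hΦΔ' hΦΔ'0 (by positivity)
    rw [real_inner_comm]
    linarith
  -- tolerance bound
  have hτbound : τ2 * Φ Δ' ^ 2 ≤ κ / 2 * η ^ 2 := by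
    have h1 : Φ Δ' ^ 2 ≤ (2 * ψ * η) ^ 2 := by nlinarith
    have h2 : τ2 * Φ Δ' ^ 2 ≤ τ2 * (2 * ψ * η) ^ 2 := mul_le_mul_of_nonneg_left h1 hτ2
    nlinarith [sq_nonneg η, sq_nonneg ψ]
  -- sqrt bound
  have hsqrt : Real.sqrt a * ψ = Real.sqrt (a * ψ ^ 2) := by
    rw [Real.sqrt_mul ha.le, Real.sqrt_sq hψ.le]
  have hκaψ : (κ / 2) * Real.sqrt a * (2 * ψ * η) ≤ κ * η ^ 2 / 4 := by
    have h1 : Real.sqrt a * ψ ≤ η / 4 := by rw [hsqrt]; linarith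
    have h2 : (κ / 2) * Real.sqrt a * (2 * ψ * η) = κ * η * (Real.sqrt a * ψ) := by ring
    rw [h2]
    calc κ * η * (Real.sqrt a * ψ) ≤ κ * η * (η / 4) := by
          exact mul_le_mul_of_nonneg_left h1 (by positivity)
      _ = κ * η ^ 2 / 4 := by ring
  -- combine
  rw [hΔ'norm] at hrsc
  have key : t * (L θ - L θs) ≥ κ * η ^ 2 / 4 := by linarith
  have hc : 0 < κ * η ^ 2 / 4 := by positivity
  have hX0 : 0 ≤ L θ - L θs := by
    by_contra h
    push_neg at h
    have : t * (L θ - L θs) ≤ 0 := mul_nonpos_of_nonneg_of_nonpos ht0.le h.le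
    linarith
  have hfin : t * (L θ - L θs) ≤ L θ - L θs := mul_le_of_le_one_left hX0 ht1.le
  linarith
end
end

section
/- Suppose Φ is decomposable with respect to (M*, M̄*⊥) with M* ⊆ M̄*, θ* ∈ M*, L is convex with subgradient g at θ*, and L satisfies RSC at θ* with radius η, curvature κ > 0 and tolerance τ². Suppose λ ≥ 2Φ*(g), 16τ²Ψ(M̄*)² ≤ κ/2, and κη > 12λΨ(M̄*). Suppose further the beta-min condition (A4'): there is c > (3/(2√2))(3 + √2) such that ‖θ*_F‖ > (c/κ)·λ·Ψ(M̄*) for every nonzero subspace F ⊆ M*. Then any minimizer θ̂(λ) of θ ↦ L(θ) + λΦ(θ) over Ω satisfies, for every nonzero subspace F ⊆ M*, ‖θ̂(λ)_F‖ ≥ ((c − (3/2)(1 + √2))/κ)·λ·Ψ(M̄*), and moreover c − (3/2)(1 + √2) > 3/(2√2). -/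
noncomputable section

open RealInnerProductSpace

variable {Ω : Type*} [NormedAddCommGroup Ω] [InnerProductSpace ℝ Ω] [FiniteDimensional ℝ Ω]

set_option linter.unusedSectionVars false

lemma normfn_zero {Φ : Ω → ℝ} (hΦ : IsNormFn Φ) : Φ 0 = 0 := (hΦ.2.2 0).mpr rfl

lemma normfn_neg {Φ : Ω → ℝ} (hΦ : IsNormFn Φ) (u : Ω) : Φ (-u) = Φ u := by
  have := hΦ.2.1 (-1) u
  simpa using this

lemma normfn_nonneg {Φ : Ω → ℝ} (hΦ : IsNormFn Φ) (u : Ω) : 0 ≤ Φ u := by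
  have h := hΦ.1 u (-u)
  rw [add_neg_cancel, normfn_zero hΦ, normfn_neg hΦ] at h
  linarith

lemma normfn_upper {Φ : Ω → ℝ} (hΦ : IsNormFn Φ) :
    ∃ C : ℝ, 0 ≤ C ∧ ∀ u : Ω, Φ u ≤ C * ‖u‖ := by
  classical
  set b := Module.finBasis ℝ Ω
  set n := Module.finrank ℝ Ω
  set f : Fin n → Ω →L[ℝ] ℝ := fun i => LinearMap.toContinuousLinearMap (b.coord i)
  refine ⟨∑ i, ‖f i‖ * Φ (b i), Finset.sum_nonneg fun i _ =>
    mul_nonneg (norm_nonneg _) (normfn_nonneg hΦ _), fun u => ?_⟩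
  have hrepr : ∑ i, b.repr u i • b i = u := b.sum_repr u
  calc Φ u = Φ (∑ i, b.repr u i • b i) := by rw [hrepr]
    _ ≤ ∑ i, Φ (b.repr u i • b i) :=
        Finset.le_sum_of_subadditive Φ (normfn_zero hΦ).le hΦ.1 _ _
    _ ≤ ∑ i, (‖f i‖ * Φ (b i)) * ‖u‖ := by
        refine Finset.sum_le_sum fun i _ => ?_
        rw [hΦ.2.1]
        have h1 : |b.repr u i| ≤ ‖f i‖ * ‖u‖ := by
          have := (f i).le_opNorm u
          simpa [f, Real.norm_eq_abs] using this
        have h2 : 0 ≤ Φ (b i) := normfn_nonneg hΦ _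
        nlinarith [abs_nonneg (b.repr u i)]
    _ = (∑ i, ‖f i‖ * Φ (b i)) * ‖u‖ := by rw [Finset.sum_mul]

lemma normfn_continuous {Φ : Ω → ℝ} (hΦ : IsNormFn Φ) : Continuous Φ := by
  obtain ⟨C, hC0, hC⟩ := normfn_upper hΦ
  have key : ∀ u v : Ω, Φ u - Φ v ≤ C * ‖u - v‖ := by
    intro u v
    have h1 := hΦ.1 (u - v) v
    rw [sub_add_cancel] at h1
    have h2 := hC (u - v)
    linarith
  have : LipschitzWith (Real.toNNReal C) Φ := by
    refine LipschitzWith.of_dist_le_mul fun u v => ?_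
    rw [Real.dist_eq, dist_eq_norm, Real.coe_toNNReal _ hC0, abs_sub_le_iff]
    constructor
    · exact key u v
    · have := key v u
      rwa [norm_sub_rev] at this
  exact this.continuous

lemma normfn_lower {Φ : Ω → ℝ} (hΦ : IsNormFn Φ) :
    ∃ m : ℝ, 0 < m ∧ ∀ u : Ω, m * ‖u‖ ≤ Φ u := by
  rcases subsingleton_or_nontrivial Ω with h | h
  · exact ⟨1, one_pos, fun u => by
      rw [Subsingleton.elim u 0]; simp [normfn_zero hΦ]⟩
  · have hcompact : IsCompact (Metric.sphere (0 : Ω) 1) := isCompact_sphere 0 1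
    have hne : (Metric.sphere (0 : Ω) 1).Nonempty := NormedSpace.sphere_nonempty.mpr zero_le_one
    obtain ⟨x0, hx0mem, hx0min⟩ := hcompact.exists_isMinOn hne (normfn_continuous hΦ).continuousOn
    have hx0norm : ‖x0‖ = 1 := by simpa using hx0mem
    have hx0ne : x0 ≠ 0 := by intro h; rw [h] at hx0norm; simp at hx0norm
    have hm : 0 < Φ x0 := lt_of_le_of_ne (normfn_nonneg hΦ _)
      (fun h => hx0ne ((hΦ.2.2 x0).mp h.symm))
    refine ⟨Φ x0, hm, fun u => ?_⟩
    rcases eq_or_ne u 0 with rfl | hu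
    · simp [normfn_zero hΦ]
    · have hun : 0 < ‖u‖ := norm_pos_iff.mpr hu
      have hmem : (‖u‖⁻¹ • u) ∈ Metric.sphere (0 : Ω) 1 := by
        simp [norm_smul, abs_of_pos (inv_pos.mpr hun), inv_mul_cancel₀ hun.ne']
      have hmin := hx0min hmem
      have heq : Φ (‖u‖⁻¹ • u) = ‖u‖⁻¹ * Φ u := by
        rw [hΦ.2.1, abs_of_pos (inv_pos.mpr hun)]
      have h2' : Φ x0 ≤ Φ u / ‖u‖ := by rw [div_eq_inv_mul, ← heq]; exact hmin
      exact (le_div_iff₀ hun).mp h2'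

lemma compat_le {Φ : Ω → ℝ} (hΦ : IsNormFn Φ) (M : Submodule ℝ Ω) {u : Ω} (hu : u ∈ M) :
    Φ u ≤ compatConst Φ M * ‖u‖ := by
  rcases eq_or_ne u 0 with rfl | hne
  · simp [normfn_zero hΦ]
  obtain ⟨C, hC0, hC⟩ := normfn_upper hΦ
  have hbdd : BddAbove {r : ℝ | ∃ v ∈ M, v ≠ 0 ∧ r = Φ v / ‖v‖} := by
    refine ⟨C, fun r hr => ?_⟩
    obtain ⟨v, hvM, hv0, rfl⟩ := hr
    have hvn : 0 < ‖v‖ := norm_pos_iff.mpr hv0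
    rw [div_le_iff₀ hvn]
    exact hC v
  have hun : 0 < ‖u‖ := norm_pos_iff.mpr hne
  have hmem : Φ u / ‖u‖ ∈ {r : ℝ | ∃ v ∈ M, v ≠ 0 ∧ r = Φ v / ‖v‖} := ⟨u, hu, hne, rfl⟩
  have hle : Φ u / ‖u‖ ≤ compatConst Φ M := le_csSup hbdd hmem
  rw [div_le_iff₀ hun] at hle
  exact hle

lemma dual_bddAbove {Φ : Ω → ℝ} (hΦ : IsNormFn Φ) (v : Ω) :
    BddAbove {r : ℝ | ∃ u : Ω, Φ u ≤ 1 ∧ r = ⟪u, v⟫} := by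
  obtain ⟨m, hm, hml⟩ := normfn_lower hΦ
  refine ⟨(1 / m) * ‖v‖, fun r hr => ?_⟩
  obtain ⟨u, hu, rfl⟩ := hr
  have h1 : ⟪u, v⟫ ≤ ‖u‖ * ‖v‖ := real_inner_le_norm u v
  have h3 : ‖u‖ ≤ 1 / m := by
    rw [le_div_iff₀ hm]
    nlinarith [hml u]
  nlinarith [norm_nonneg v, norm_nonneg u]

lemma dual_nonneg {Φ : Ω → ℝ} (hΦ : IsNormFn Φ) (v : Ω) : 0 ≤ dualNorm Φ v :=
  le_csSup (dual_bddAbove hΦ v) ⟨0, by simp [normfn_zero hΦ]⟩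

lemma inner_le_dual {Φ : Ω → ℝ} (hΦ : IsNormFn Φ) (u v : Ω) :
    ⟪u, v⟫ ≤ dualNorm Φ v * Φ u := by
  rcases eq_or_ne u 0 with rfl | hne
  · simp [normfn_zero hΦ]
  have hΦu : 0 < Φ u :=
    lt_of_le_of_ne (normfn_nonneg hΦ u) (fun h => hne ((hΦ.2.2 u).mp h.symm))
  set w : Ω := (Φ u)⁻¹ • u with hw
  have hΦw : Φ w = 1 := by
    rw [hw, hΦ.2.1, abs_of_pos (inv_pos.mpr hΦu), inv_mul_cancel₀ hΦu.ne']
  have hle : ⟪w, v⟫ ≤ dualNorm Φ v :=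
    le_csSup (dual_bddAbove hΦ v) ⟨w, hΦw.le, rfl⟩
  have hwv : ⟪w, v⟫ = (Φ u)⁻¹ * ⟪u, v⟫ := by rw [hw, real_inner_smul_left]
  have hinner : ⟪u, v⟫ = Φ u * ⟪w, v⟫ := by
    rw [hwv]; field_simp
  rw [hinner, mul_comm (dualNorm Φ v) (Φ u)]
  exact mul_le_mul_of_nonneg_left hle hΦu.le

set_option maxHeartbeats 1000000 in
/-- under the beta-min condition (A4'), the projections of the
regularized minimizer onto nonzero subspaces of `M*` stay bounded away from zero. -/
theorem betamin_projection_lower_bound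
    (Φ : Ω → ℝ) (hΦ : IsNormFn Φ)
    (Mstar Mbarstar : Submodule ℝ Ω) (hMM : Mstar ≤ Mbarstar)
    (hdec : Decomposable Φ Mstar Mbarstar)
    (L : Ω → ℝ) (hLconv : ConvexOn ℝ Set.univ L)
    (θs g : Ω) (hθs : θs ∈ Mstar) (hg : IsSubgradientAt L g θs)
    (η κ τ2 : ℝ) (hη : 0 < η) (hκpos : 0 < κ) (hτ2 : 0 ≤ τ2)
    (hRSC : RSC L Φ θs g η κ τ2)
    (lam : ℝ) (hlam : lam ≥ 2 * dualNorm Φ g)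
    (hτΨ : 16 * τ2 * compatConst Φ Mbarstar ^ 2 ≤ κ / 2)
    (hκη : κ * η > 12 * lam * compatConst Φ Mbarstar)
    (c : ℝ) (hc : c > (3 / (2 * Real.sqrt 2)) * (3 + Real.sqrt 2))
    (hbetamin : ∀ F : Submodule ℝ Ω, F ≤ Mstar → F ≠ ⊥ →
      ‖(Submodule.orthogonalProjectionOnto F θs : Ω)‖ > (c / κ) * lam * compatConst Φ Mbarstar)
    (θhat : Ω) (hθhat : ∀ θ : Ω, L θhat + lam * Φ θhat ≤ L θ + lam * Φ θ) :
    (∀ F : Submodule ℝ Ω, F ≤ Mstar → F ≠ ⊥ →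
        ‖(Submodule.orthogonalProjectionOnto F θhat : Ω)‖ ≥
          ((c - (3 / 2) * (1 + Real.sqrt 2)) / κ) * lam * compatConst Φ Mbarstar) ∧
      c - (3 / 2) * (1 + Real.sqrt 2) > 3 / (2 * Real.sqrt 2) := by
  classical
  obtain ⟨hadd, hsmul, heq0⟩ := id hΦ
  set Ψ := compatConst Φ Mbarstar with hΨdef
  have hΦnn := normfn_nonneg hΦ
  have hdualnn : 0 ≤ dualNorm Φ g := dual_nonneg hΦ g
  have hlam0 : 0 ≤ lam := by linarith
  set s := Real.sqrt 2 with hsdef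
  have hs0 : (0:ℝ) < s := Real.sqrt_pos.mpr (by norm_num)
  have hs2 : s ^ 2 = 2 := Real.sq_sqrt (by norm_num)
  have hs1 : 1 ≤ s := by nlinarith
  have hc' : 9 + 3 * s < 2 * s * c := by
    rw [gt_iff_lt, div_mul_eq_mul_div, div_lt_iff₀ (by positivity)] at hc
    nlinarith [hc]
  have harith : c - (3 / 2) * (1 + s) > 3 / (2 * s) := by
    rw [gt_iff_lt, div_lt_iff₀ (by positivity)]
    nlinarith
  refine ⟨?_, harith⟩
  have hx3 : (3:ℝ) ≤ (3 / 2) * (1 + s) := by linarith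
  have hcx : 0 < c - (3 / 2) * (1 + s) := lt_trans (by positivity) harith
  intro F hF hFne
  by_cases hpos : lam * Ψ ≤ 0
  · have hle0 : ((c - (3 / 2) * (1 + s)) / κ) * lam * Ψ ≤ 0 := by
      rw [mul_assoc]
      exact mul_nonpos_of_nonneg_of_nonpos (div_nonneg hcx.le hκpos.le) hpos
    exact le_trans hle0 (norm_nonneg _)
  push_neg at hpos
  have hlampos : 0 < lam := by
    rcases hlam0.lt_or_eq with h | h
    · exact h
    · exfalso; rw [← h] at hpos; simp at hpos
  have hΨpos : 0 < Ψ := by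
    by_contra h; push_neg at h; nlinarith
  set Δ := θhat - θs with hΔdef
  -- Key step: any admissible error direction satisfies the basic error bound.
  have key : ∀ d : Ω, ‖d‖ ≤ η →
      L (θs + d) + lam * Φ (θs + d) ≤ L θs + lam * Φ θs → κ * ‖d‖ ≤ 3 * lam * Ψ := by
    intro d hdη hmin
    set a : Ω := (Submodule.orthogonalProjectionOnto Mbarstar d : Ω) with ha
    set b : Ω := d - a with hb
    have hbmem : b ∈ Mbarstarᗮ := Submodule.sub_starProjection_mem_orthogonal (K := Mbarstar) d
    have hdab : d = a + b := by rw [hb]; abel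
    have hamem : a ∈ Mbarstar := (Submodule.orthogonalProjectionOnto Mbarstar d).2
    have hΦaΨ : Φ a ≤ Ψ * ‖a‖ := compat_le hΦ Mbarstar hamem
    have hanorm : ‖a‖ ≤ ‖d‖ := by
      calc ‖a‖ = ‖Submodule.orthogonalProjectionOnto Mbarstar d‖ := rfl
        _ ≤ ‖Submodule.orthogonalProjectionOnto Mbarstar‖ * ‖d‖ := (Submodule.orthogonalProjectionOnto Mbarstar).le_opNorm d
        _ ≤ 1 * ‖d‖ :=
            mul_le_mul_of_nonneg_right (Submodule.orthogonalProjectionOnto_norm_le Mbarstar) (norm_nonneg d)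
        _ = ‖d‖ := one_mul _
    have hΦaΨd : Φ a ≤ Ψ * ‖d‖ :=
      le_trans hΦaΨ (mul_le_mul_of_nonneg_left hanorm hΨpos.le)
    have hdecb : Φ (θs + b) = Φ θs + Φ b := hdec θs hθs b hbmem
    have htri1 : Φ (θs + b) ≤ Φ (θs + d) + Φ a := by
      have hrw : θs + b = (θs + d) + (-a) := by rw [hdab]; abel
      rw [hrw]
      have h := hadd (θs + d) (-a)
      rwa [normfn_neg hΦ a] at h
    have hkey1 : Φ θs + Φ b - Φ a ≤ Φ (θs + d) := by
      rw [hdecb] at htri1; linarith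
    have hsg : L (θs + d) ≥ L θs + ⟪g, d⟫ := by
      have := hg (θs + d); simpa using this
    have hΦdab : Φ d ≤ Φ a + Φ b := by
      calc Φ d = Φ (a + b) := by rw [← hdab]
        _ ≤ Φ a + Φ b := hadd a b
    have hgd : -(lam / 2) * Φ d ≤ ⟪g, d⟫ := by
      have h1 : -⟪d, g⟫ ≤ dualNorm Φ g * Φ d := by
        have := inner_le_dual hΦ (-d) g
        rwa [normfn_neg hΦ d, inner_neg_left] at this
      have h2 : ⟪d, g⟫ = ⟪g, d⟫ := real_inner_comm g d
      have hdle : dualNorm Φ g * Φ d ≤ (lam / 2) * Φ d :=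
        mul_le_mul_of_nonneg_right (by linarith) (hΦnn d)
      linarith
    have e1 : lam * (Φ θs + Φ b - Φ a) ≤ lam * Φ (θs + d) :=
      mul_le_mul_of_nonneg_left hkey1 hlam0
    have e1' : lam * (Φ θs + Φ b - Φ a) = lam * Φ θs + lam * Φ b - lam * Φ a := by ring
    have e2 : lam * Φ a ≤ lam * (Ψ * ‖d‖) := mul_le_mul_of_nonneg_left hΦaΨd hlam0
    have e3 : lam * Φ d ≤ lam * (Φ a + Φ b) := mul_le_mul_of_nonneg_left hΦdab hlam0
    have e3' : lam * (Φ a + Φ b) = lam * Φ a + lam * Φ b := by ring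
    have e4 : 0 ≤ lam * Φ b := mul_nonneg hlam0 (hΦnn b)
    -- cone condition
    have hconelam : lam * Φ b ≤ 3 * (lam * Φ a) := by linarith [hsg, hmin, hgd, e1, e1', e3, e3']
    have hcone : Φ b ≤ 3 * Φ a := by
      have h := hconelam
      have h' : lam * Φ b ≤ lam * (3 * Φ a) := by linarith
      exact le_of_mul_le_mul_left h' hlampos
    have hΦd4 : Φ d ≤ 4 * (Ψ * ‖d‖) := by linarith
    have hτd : τ2 * Φ d ^ 2 ≤ (κ / 2) * ‖d‖ ^ 2 := by
      have hXnn : 0 ≤ Ψ * ‖d‖ := mul_nonneg hΨpos.le (norm_nonneg d)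
      have h1 : Φ d ^ 2 ≤ 16 * (Ψ * ‖d‖) ^ 2 := by nlinarith [hΦnn d]
      have h2 : τ2 * Φ d ^ 2 ≤ τ2 * (16 * (Ψ * ‖d‖) ^ 2) := mul_le_mul_of_nonneg_left h1 hτ2
      have h3 : τ2 * (16 * (Ψ * ‖d‖) ^ 2) = (16 * τ2 * Ψ ^ 2) * ‖d‖ ^ 2 := by ring
      nlinarith [sq_nonneg ‖d‖]
    have hrsc := hRSC d hdη
    have hmain : κ * ‖d‖ ^ 2 ≤ 3 / 2 * (lam * (Ψ * ‖d‖)) + (κ / 2) * ‖d‖ ^ 2 := by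
      linarith [hrsc, hmin, hgd, e1, e1', e2, e3, e3', e4, hτd]
    rcases (norm_nonneg d).lt_or_eq with h0 | h0
    · nlinarith [hmain]
    · rw [← h0]; nlinarith
  -- convexity of the objective
  have hΦconv : ConvexOn ℝ Set.univ Φ := by
    refine ⟨convex_univ, fun x _ y _ p q hp hq hpq => ?_⟩
    calc Φ (p • x + q • y) ≤ Φ (p • x) + Φ (q • y) := hadd _ _
      _ = p * Φ x + q * Φ y := by rw [hsmul, hsmul, abs_of_nonneg hp, abs_of_nonneg hq]
      _ = p • Φ x + q • Φ y := by simp [smul_eq_mul]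
  have hlamΦconv : ConvexOn ℝ Set.univ (fun x => lam * Φ x) := by
    simpa [smul_eq_mul] using hΦconv.smul hlam0
  have hfconv : ConvexOn ℝ Set.univ (fun x => L x + lam * Φ x) := hLconv.add hlamΦconv
  -- error bound for Δ
  have hbd : κ * ‖Δ‖ ≤ 3 * lam * Ψ := by
    rcases le_or_gt ‖Δ‖ η with hle | hlt
    · have hrw : θs + Δ = θhat := by rw [hΔdef]; abel
      exact key Δ hle (by rw [hrw]; exact hθhat θs)
    · exfalso
      have hΔn : 0 < ‖Δ‖ := lt_trans hη hlt
      set t := η / ‖Δ‖ with htdef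
      have ht0 : 0 < t := div_pos hη hΔn
      have ht1 : t < 1 := (div_lt_one hΔn).mpr hlt
      set d := t • Δ with hddef
      have hdn : ‖d‖ = η := by
        rw [hddef, norm_smul, Real.norm_eq_abs, abs_of_pos ht0, htdef]
        field_simp
      have hd2 : θs + d = t • θhat + (1 - t) • θs := by
        rw [hddef, hΔdef]; module
      have hconv := hfconv.2 (Set.mem_univ θhat) (Set.mem_univ θs) ht0.le
        (by linarith : (0:ℝ) ≤ 1 - t) (by ring)
      have hft : L θhat + lam * Φ θhat ≤ L θs + lam * Φ θs := hθhat θs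
      have hmind : L (θs + d) + lam * Φ (θs + d) ≤ L θs + lam * Φ θs := by
        rw [hd2]
        refine le_trans hconv ?_
        simp only [smul_eq_mul]
        nlinarith
      have hkd := key d (le_of_eq hdn) hmind
      rw [hdn] at hkd
      linarith
  -- conclude
  have hrwhat : θhat = θs + Δ := by rw [hΔdef]; abel
  have hproj1 : (Submodule.orthogonalProjectionOnto F θhat : Ω) =
      (Submodule.orthogonalProjectionOnto F θs : Ω) + (Submodule.orthogonalProjectionOnto F Δ : Ω) := by
    conv_lhs => rw [hrwhat]
    rw [map_add]
    simp
  have hprojΔ : ‖(Submodule.orthogonalProjectionOnto F Δ : Ω)‖ ≤ ‖Δ‖ := by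
    calc ‖(Submodule.orthogonalProjectionOnto F Δ : Ω)‖ = ‖Submodule.orthogonalProjectionOnto F Δ‖ := rfl
      _ ≤ ‖Submodule.orthogonalProjectionOnto F‖ * ‖Δ‖ := (Submodule.orthogonalProjectionOnto F).le_opNorm Δ
      _ ≤ 1 * ‖Δ‖ :=
          mul_le_mul_of_nonneg_right (Submodule.orthogonalProjectionOnto_norm_le F) (norm_nonneg Δ)
      _ = ‖Δ‖ := one_mul _
  have htriangle : ‖(Submodule.orthogonalProjectionOnto F θs : Ω)‖ - ‖(Submodule.orthogonalProjectionOnto F Δ : Ω)‖ ≤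
      ‖(Submodule.orthogonalProjectionOnto F θhat : Ω)‖ := by
    rw [hproj1]
    have := norm_sub_norm_le (Submodule.orthogonalProjectionOnto F θs : Ω) (-(Submodule.orthogonalProjectionOnto F Δ : Ω))
    simp only [norm_neg, sub_neg_eq_add] at this
    linarith
  have hbet := hbetamin F hF hFne
  rw [gt_iff_lt, div_mul_eq_mul_div, div_mul_eq_mul_div, div_lt_iff₀ hκpos] at hbet
  rw [ge_iff_le, div_mul_eq_mul_div, div_mul_eq_mul_div, div_le_iff₀ hκpos]
  have h5 : ‖(Submodule.orthogonalProjectionOnto F θs : Ω)‖ - ‖Δ‖ ≤ ‖(Submodule.orthogonalProjectionOnto F θhat : Ω)‖ := by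
    linarith
  have h6 := mul_le_mul_of_nonneg_right h5 hκpos.le
  nlinarith [hbet, hbd, hx3, hpos]
end
end

section
/- Suppose Φ is decomposable with respect to (M*, M̄*⊥) with M* ⊆ M̄*, θ* ∈ M*, L is convex with subgradient g at θ*, and L satisfies RSC at θ* with radius η, curvature κ > 0 and tolerance τ². Suppose λ > 0 with λ ≥ 2Φ*(g), Ψ(M̄*) > 0, 16τ²Ψ(M̄*)² ≤ κ/2, κη > 12λΨ(M̄*), and the beta-min condition (A4') holds: there is c > (3/(2√2))(3 + √2) such that ‖θ*_F‖ > (c/κ)·λ·Ψ(M̄*) for every nonzero subspace F ⊆ M*. Set c' = c − (3/2)(1 + √2) and the threshold ξ = (c'/κ)·λ·Ψ(M̄*). Then any minimizer θ̂(λ) of θ ↦ L(θ) + λΦ(θ) over Ω satisfies: (i) ‖θ̂(λ)_F‖ ≥ ξ for every nonzero subspace F ⊆ M*, and (ii) ‖θ̂(λ)_{M̄*⊥}‖ < ξ. In particular, M* is recovered by thresholding the projections of θ̂(λ) at level ξ. -/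
noncomputable section

open RealInnerProductSpace

variable {Ω : Type*} [NormedAddCommGroup Ω] [InnerProductSpace ℝ Ω] [FiniteDimensional ℝ Ω]

namespace AuxNorm

theorem zero {Φ : Ω → ℝ} (hΦ : IsNormFn Φ) : Φ 0 = 0 := (hΦ.2.2 0).2 rfl

theorem neg' {Φ : Ω → ℝ} (hΦ : IsNormFn Φ) (u : Ω) : Φ (-u) = Φ u := by
  have := hΦ.2.1 (-1) u
  simpa using this

theorem nonneg {Φ : Ω → ℝ} (hΦ : IsNormFn Φ) (u : Ω) : 0 ≤ Φ u := by
  have h1 := hΦ.1 u (-u)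
  rw [add_neg_cancel, zero hΦ, neg' hΦ] at h1
  linarith

theorem sum_le {Φ : Ω → ℝ} (hΦ : IsNormFn Φ) {ι : Type*} (s : Finset ι) (f : ι → Ω) :
    Φ (∑ i ∈ s, f i) ≤ ∑ i ∈ s, Φ (f i) := by
  classical
  induction s using Finset.induction_on with
  | empty => simp [zero hΦ]
  | insert a s hx ih =>
      rw [Finset.sum_insert hx, Finset.sum_insert hx]
      exact le_trans (hΦ.1 _ _) (by linarith)

theorem upper {Φ : Ω → ℝ} (hΦ : IsNormFn Φ) : ∃ C : ℝ, 0 ≤ C ∧ ∀ u : Ω, Φ u ≤ C * ‖u‖ := by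
  classical
  set b := Module.finBasis ℝ Ω
  set gi : Fin (Module.finrank ℝ Ω) → (Ω →L[ℝ] ℝ) :=
    fun i => LinearMap.toContinuousLinearMap (b.coord i)
  refine ⟨∑ i, ‖gi i‖ * Φ (b i), Finset.sum_nonneg fun i _ =>
    mul_nonneg (norm_nonneg _) (nonneg hΦ _), fun u => ?_⟩
  have hrep : ∑ i, b.repr u i • b i = u := b.sum_repr u
  calc Φ u = Φ (∑ i, b.repr u i • b i) := by rw [hrep]
    _ ≤ ∑ i, Φ (b.repr u i • b i) := sum_le hΦ _ _
    _ ≤ ∑ i, (‖gi i‖ * Φ (b i)) * ‖u‖ := by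
        refine Finset.sum_le_sum fun i _ => ?_
        rw [hΦ.2.1]
        have h1 : |b.repr u i| ≤ ‖gi i‖ * ‖u‖ := by
          have h2 := (gi i).le_opNorm u
          have hg : gi i u = b.repr u i := by
            simp [gi, LinearMap.coe_toContinuousLinearMap', Module.Basis.coord_apply]
          rw [hg] at h2
          simpa [Real.norm_eq_abs] using h2
        nlinarith [nonneg hΦ (b i), abs_nonneg (b.repr u i)]
    _ = (∑ i, ‖gi i‖ * Φ (b i)) * ‖u‖ := by rw [Finset.sum_mul]

theorem continuous {Φ : Ω → ℝ} (hΦ : IsNormFn Φ) : Continuous Φ := by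
  obtain ⟨C, hC0, hC⟩ := upper hΦ
  have : LipschitzWith (Real.toNNReal C) Φ := by
    refine LipschitzWith.of_dist_le_mul fun x y => ?_
    have h1 : Φ x ≤ Φ (x - y) + Φ y := by
      have := hΦ.1 (x - y) y; simpa [sub_add_cancel] using this
    have h2 : Φ y ≤ Φ (y - x) + Φ x := by
      have := hΦ.1 (y - x) x; simpa [sub_add_cancel] using this
    have h3 : Φ (y - x) = Φ (x - y) := by rw [← neg_sub x y, neg' hΦ]
    rw [Real.dist_eq, dist_eq_norm, Real.coe_toNNReal C hC0]
    have := hC (x - y)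
    rw [abs_le]
    constructor <;> nlinarith
  exact this.continuous

theorem lower {Φ : Ω → ℝ} (hΦ : IsNormFn Φ) :
    ∃ α : ℝ, 0 < α ∧ ∀ u : Ω, α * ‖u‖ ≤ Φ u := by
  rcases subsingleton_or_nontrivial Ω with h | h
  · exact ⟨1, one_pos, fun u => by
      rw [Subsingleton.elim u 0]; simp [zero hΦ]⟩
  · have hsne : (Metric.sphere (0:Ω) 1).Nonempty := NormedSpace.sphere_nonempty.mpr zero_le_one
    obtain ⟨x0, hx0s, hx0min⟩ := (isCompact_sphere (0:Ω) 1).exists_isMinOn hsne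
      ((continuous hΦ).continuousOn)
    have hx0norm : ‖x0‖ = 1 := by simpa using hx0s
    have hx0ne : x0 ≠ 0 := by intro h; rw [h] at hx0norm; simp at hx0norm
    have hα : 0 < Φ x0 := lt_of_le_of_ne (nonneg hΦ x0)
      (fun h => hx0ne ((hΦ.2.2 x0).1 h.symm))
    refine ⟨Φ x0, hα, fun u => ?_⟩
    rcases eq_or_ne u 0 with rfl | hu
    · simp [zero hΦ]
    · have hun : (0:ℝ) < ‖u‖ := norm_pos_iff.mpr hu
      have hw : ‖u‖⁻¹ • u ∈ Metric.sphere (0:Ω) 1 := by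
        simp [norm_smul, abs_of_pos (inv_pos.mpr hun), inv_mul_cancel₀ (ne_of_gt hun)]
      have hmin : Φ x0 ≤ Φ (‖u‖⁻¹ • u) := hx0min hw
      have hΦw : Φ (‖u‖⁻¹ • u) = ‖u‖⁻¹ * Φ u := by
        rw [hΦ.2.1, abs_of_pos (inv_pos.mpr hun)]
      rw [hΦw] at hmin
      calc Φ x0 * ‖u‖ ≤ (‖u‖⁻¹ * Φ u) * ‖u‖ := by nlinarith [hmin]
        _ = Φ u := by field_simp

end AuxNorm

set_option maxHeartbeats 1000000 in
/-- thresholding the projections of the regularized minimizer at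
level `ξ = (c'/κ)·λ·Ψ(M̄*)` separates `M*` from `M̄*ᗮ`, so `M*` is recovered. -/
theorem threshold_recovery
    (Φ : Ω → ℝ) (hΦ : IsNormFn Φ)
    (Mstar Mbarstar : Submodule ℝ Ω) (hMM : Mstar ≤ Mbarstar)
    (hdec : Decomposable Φ Mstar Mbarstar)
    (L : Ω → ℝ) (hLconv : ConvexOn ℝ Set.univ L)
    (θs g : Ω) (hθs : θs ∈ Mstar) (hg : IsSubgradientAt L g θs)
    (η κ τ2 : ℝ) (hη : 0 < η) (hκpos : 0 < κ) (hτ2 : 0 ≤ τ2)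
    (hRSC : RSC L Φ θs g η κ τ2)
    (lam : ℝ) (hlampos : 0 < lam) (hlam : lam ≥ 2 * dualNorm Φ g)
    (hΨpos : 0 < compatConst Φ Mbarstar)
    (hτΨ : 16 * τ2 * compatConst Φ Mbarstar ^ 2 ≤ κ / 2)
    (hκη : κ * η > 12 * lam * compatConst Φ Mbarstar)
    (c : ℝ) (hc : c > (3 / (2 * Real.sqrt 2)) * (3 + Real.sqrt 2))
    (hbetamin : ∀ F : Submodule ℝ Ω, F ≤ Mstar → F ≠ ⊥ →
      ‖(Submodule.orthogonalProjection F θs : Ω)‖ > (c / κ) * lam * compatConst Φ Mbarstar)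
    (θhat : Ω) (hθhat : ∀ θ : Ω, L θhat + lam * Φ θhat ≤ L θ + lam * Φ θ)
    (c' ξ : ℝ) (hc' : c' = c - (3 / 2) * (1 + Real.sqrt 2))
    (hξ : ξ = (c' / κ) * lam * compatConst Φ Mbarstar) :
    (∀ F : Submodule ℝ Ω, F ≤ Mstar → F ≠ ⊥ →
        ‖(Submodule.orthogonalProjection F θhat : Ω)‖ ≥ ξ) ∧
      ‖(Submodule.orthogonalProjection Mbarstarᗮ θhat : Ω)‖ < ξ := by
  obtain ⟨C, hC0, hCub⟩ := AuxNorm.upper hΦ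
  obtain ⟨α, hαpos, hαlb⟩ := AuxNorm.lower hΦ
  set Ψ := compatConst Φ Mbarstar with hΨdef
  have hSpos : 0 < lam * Ψ := mul_pos hlampos hΨpos
  -- compatibility bound
  have hcompat : ∀ u : Ω, u ∈ Mbarstar → Φ u ≤ Ψ * ‖u‖ := by
    intro u hu
    rcases eq_or_ne u 0 with rfl | hune
    · simp [AuxNorm.zero hΦ]
    · have hun : (0:ℝ) < ‖u‖ := norm_pos_iff.mpr hune
      have hbdd : BddAbove {r : ℝ | ∃ v ∈ Mbarstar, v ≠ 0 ∧ r = Φ v / ‖v‖} := by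
        refine ⟨C, fun r hr => ?_⟩
        obtain ⟨v, _, hvne, rfl⟩ := hr
        have hvn : (0:ℝ) < ‖v‖ := norm_pos_iff.mpr hvne
        rw [div_le_iff₀ hvn]
        exact hCub v
      have hmem : Φ u / ‖u‖ ∈ {r : ℝ | ∃ v ∈ Mbarstar, v ≠ 0 ∧ r = Φ v / ‖v‖} :=
        ⟨u, hu, hune, rfl⟩
      have hle : Φ u / ‖u‖ ≤ Ψ := le_csSup hbdd hmem
      rw [div_le_iff₀ hun] at hle
      linarith only [hle]
  -- dual norm bound
  have hdual : ∀ w : Ω, -⟪g, w⟫ ≤ lam / 2 * Φ w := by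
    intro w
    have hbddS : BddAbove {r : ℝ | ∃ u : Ω, Φ u ≤ 1 ∧ r = ⟪u, g⟫} := by
      refine ⟨‖g‖ / α, fun r hr => ?_⟩
      obtain ⟨u, hu1, rfl⟩ := hr
      have h1 : ⟪u, g⟫ ≤ ‖u‖ * ‖g‖ := real_inner_le_norm u g
      have h2 := hαlb u
      rw [le_div_iff₀ hαpos]
      nlinarith only [h1, h2, hu1, norm_nonneg g, norm_nonneg u, hαpos]
    rcases eq_or_ne w 0 with rfl | hwne
    · simp [AuxNorm.zero hΦ]
    · have hΦw : 0 < Φ w :=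
        lt_of_lt_of_le (mul_pos hαpos (norm_pos_iff.mpr hwne)) (hαlb w)
      have hu1 : Φ ((Φ w)⁻¹ • (-w)) ≤ 1 := by
        rw [hΦ.2.1, AuxNorm.neg' hΦ, abs_of_pos (inv_pos.mpr hΦw),
          inv_mul_cancel₀ (ne_of_gt hΦw)]
      have hmem : ⟪(Φ w)⁻¹ • (-w), g⟫ ∈ {r : ℝ | ∃ u : Ω, Φ u ≤ 1 ∧ r = ⟪u, g⟫} :=
        ⟨_, hu1, rfl⟩
      have hle : ⟪(Φ w)⁻¹ • (-w), g⟫ ≤ dualNorm Φ g := le_csSup hbddS hmem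
      rw [real_inner_smul_left, inner_neg_left] at hle
      rw [inv_mul_le_iff₀ hΦw, ← real_inner_comm w g] at hle
      have h2 : dualNorm Φ g ≤ lam / 2 := by linarith only [hlam]
      nlinarith only [hle, h2, hΦw]
  -- projections don't increase norm
  have hproj_le : ∀ (K : Submodule ℝ Ω) (x : Ω), ‖(Submodule.orthogonalProjection K x : Ω)‖ ≤ ‖x‖ := by
    intro K x
    have h := Submodule.norm_sq_eq_add_norm_sq_projection x K
    simp only [Submodule.coe_norm] at h
    nlinarith only [h, norm_nonneg ((Submodule.orthogonalProjection Kᗮ x) : Ω),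
      norm_nonneg ((Submodule.orthogonalProjection K x) : Ω), norm_nonneg x]
  set Δ := θhat - θs with hΔdef
  -- key inequality
  have key : ∀ Δ0 : Ω,
      L (θs + Δ0) + lam * Φ (θs + Δ0) ≤ L θs + lam * Φ θs → ‖Δ0‖ ≤ η →
      κ * (‖(Submodule.orthogonalProjection Mbarstar Δ0 : Ω)‖ ^ 2
          + ‖(Submodule.orthogonalProjection Mbarstarᗮ Δ0 : Ω)‖ ^ 2)
        ≤ κ / 2 * ‖(Submodule.orthogonalProjection Mbarstar Δ0 : Ω)‖ ^ 2
          + 3 * lam / 2 * (Ψ * ‖(Submodule.orthogonalProjection Mbarstar Δ0 : Ω)‖) := by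
    intro Δ0 hval hnorm
    set p := (Submodule.orthogonalProjection Mbarstar Δ0 : Ω) with hp
    set q := (Submodule.orthogonalProjection Mbarstarᗮ Δ0 : Ω) with hq
    have hpq : p + q = Δ0 :=
      Submodule.starProjection_add_starProjection_orthogonal (K := Mbarstar) Δ0
    have hpmem : p ∈ Mbarstar := (Submodule.orthogonalProjection Mbarstar Δ0).2
    have hqmem : q ∈ Mbarstarᗮ := (Submodule.orthogonalProjection Mbarstarᗮ Δ0).2
    have ha0 : 0 ≤ Φ p := AuxNorm.nonneg hΦ p
    have hb0 : 0 ≤ Φ q := AuxNorm.nonneg hΦ q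
    have hdec1 : Φ (θs + q) = Φ θs + Φ q := hdec θs hθs q hqmem
    have h2 : Φ θs + Φ q ≤ Φ (θs + Δ0) + Φ p := by
      have heq : θs + q = (θs + Δ0) + (-p) := by rw [← hpq]; abel
      calc Φ θs + Φ q = Φ (θs + q) := hdec1.symm
        _ = Φ ((θs + Δ0) + (-p)) := by rw [heq]
        _ ≤ Φ (θs + Δ0) + Φ (-p) := hΦ.1 _ _
        _ = Φ (θs + Δ0) + Φ p := by rw [AuxNorm.neg' hΦ]
    have hsg : L (θs + Δ0) - L θs - ⟪g, Δ0⟫ ≥ 0 := by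
      have h := hg (θs + Δ0)
      rw [add_sub_cancel_left] at h
      linarith only [h]
    have hΦΔab : Φ Δ0 ≤ Φ p + Φ q := by rw [← hpq]; exact hΦ.1 p q
    have hgd : -⟪g, Δ0⟫ ≤ lam / 2 * Φ Δ0 := hdual Δ0
    have hLd : L (θs + Δ0) - L θs ≤ lam * (Φ p - Φ q) := by
      have h2l := mul_le_mul_of_nonneg_left h2 hlampos.le
      linarith only [h2l, hval]
    have hgd2 : -⟪g, Δ0⟫ ≤ lam / 2 * (Φ p + Φ q) :=
      le_trans hgd (mul_le_mul_of_nonneg_left hΦΔab (by positivity))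
    have hcone : Φ q ≤ 3 * Φ p := by nlinarith only [hsg, hgd2, hLd, hlampos]
    have hpb := hcompat p hpmem
    have hΦΔ : Φ Δ0 ≤ 4 * (Ψ * ‖p‖) := by linarith only [hΦΔab, hcone, hpb]
    have hRSC0 := hRSC Δ0 hnorm
    have hupper : L (θs + Δ0) - L θs - ⟪g, Δ0⟫ ≤ 3 * lam / 2 * Φ p - lam / 2 * Φ q := by
      linarith only [hLd, hgd2]
    have hpyth : ‖Δ0‖ ^ 2 = ‖p‖ ^ 2 + ‖q‖ ^ 2 := by
      have h := Submodule.norm_sq_eq_add_norm_sq_projection Δ0 Mbarstar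
      simp only [Submodule.coe_norm] at h
      exact h
    have htau : τ2 * Φ Δ0 ^ 2 ≤ κ / 2 * ‖p‖ ^ 2 := by
      have h1 : Φ Δ0 ^ 2 ≤ 16 * (Ψ * ‖p‖) ^ 2 := by
        nlinarith only [AuxNorm.nonneg hΦ Δ0, hΦΔ]
      linarith only [mul_le_mul_of_nonneg_left h1 hτ2,
        mul_le_mul_of_nonneg_right hτΨ (sq_nonneg ‖p‖)]
    have hfin : κ * ‖Δ0‖ ^ 2 - τ2 * Φ Δ0 ^ 2 ≤ 3 * lam / 2 * (Ψ * ‖p‖) := by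
      have h3 := mul_le_mul_of_nonneg_left hpb (by positivity : (0:ℝ) ≤ 3 * lam / 2)
      have h4 : 0 ≤ lam / 2 * Φ q := mul_nonneg (by positivity) hb0
      linarith only [hRSC0, hupper, h3, h4]
    rw [hpyth] at hfin
    linarith only [hfin, htau]
  -- the error is within the RSC radius
  have hΔle : ‖Δ‖ ≤ η := by
    by_contra hcon
    push_neg at hcon
    have hΔpos : 0 < ‖Δ‖ := lt_trans hη hcon
    set t := η / ‖Δ‖ with ht
    have ht0 : 0 < t := div_pos hη hΔpos
    have ht1 : t < 1 := (div_lt_one hΔpos).mpr hcon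
    have hΔ0norm : ‖t • Δ‖ = η := by
      rw [norm_smul, Real.norm_eq_abs, abs_of_pos ht0, ht,
        div_mul_cancel₀ _ (ne_of_gt hΔpos)]
    have hcomb : θs + t • Δ = (1 - t) • θs + t • θhat := by
      rw [hΔdef]; module
    have hLc := hLconv.2 (Set.mem_univ θs) (Set.mem_univ θhat)
      (by linarith only [ht1] : (0:ℝ) ≤ 1 - t) ht0.le (by ring)
    have hΦc : Φ ((1 - t) • θs + t • θhat) ≤ (1 - t) * Φ θs + t * Φ θhat := by
      calc Φ ((1 - t) • θs + t • θhat) ≤ Φ ((1 - t) • θs) + Φ (t • θhat) := hΦ.1 _ _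
        _ = (1 - t) * Φ θs + t * Φ θhat := by
            rw [hΦ.2.1, hΦ.2.1, abs_of_nonneg (by linarith only [ht1] : (0:ℝ) ≤ 1 - t),
              abs_of_pos ht0]
    have hval : L (θs + t • Δ) + lam * Φ (θs + t • Δ) ≤ L θs + lam * Φ θs := by
      rw [hcomb]
      have hm1 := mul_le_mul_of_nonneg_left hΦc hlampos.le
      have hm2 := mul_le_mul_of_nonneg_left (hθhat θs) ht0.le
      simp only [smul_eq_mul] at hLc
      linarith only [hLc, hm1, hm2]
    have hkey := key (t • Δ) hval (le_of_eq hΔ0norm)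
    have hu_le : ‖(Submodule.orthogonalProjection Mbarstar (t • Δ) : Ω)‖ ≤ η := by
      have h := hproj_le Mbarstar (t • Δ); rw [hΔ0norm] at h; exact h
    have hu0 : (0:ℝ) ≤ ‖(Submodule.orthogonalProjection Mbarstar (t • Δ) : Ω)‖ := norm_nonneg _
    have hpyth : ‖(Submodule.orthogonalProjection Mbarstar (t • Δ) : Ω)‖ ^ 2
        + ‖(Submodule.orthogonalProjection Mbarstarᗮ (t • Δ) : Ω)‖ ^ 2 = η ^ 2 := by
      have h := Submodule.norm_sq_eq_add_norm_sq_projection (t • Δ) Mbarstar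
      simp only [Submodule.coe_norm] at h
      rw [hΔ0norm] at h
      exact h.symm
    have hsq : ‖(Submodule.orthogonalProjection Mbarstar (t • Δ) : Ω)‖ ^ 2 ≤ η ^ 2 := by
      nlinarith only [hu_le, hu0]
    have hps : Ψ * ‖(Submodule.orthogonalProjection Mbarstar (t • Δ) : Ω)‖ ≤ Ψ * η :=
      mul_le_mul_of_nonneg_left hu_le hΨpos.le
    have hκη2 : κ * η ^ 2 ≤ κ / 2 * η ^ 2 + 3 * lam / 2 * (Ψ * η) := by
      have h1 := mul_le_mul_of_nonneg_left hsq (by positivity : (0:ℝ) ≤ κ / 2)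
      have h2 := mul_le_mul_of_nonneg_left hps (by positivity : (0:ℝ) ≤ 3 * lam / 2)
      rw [hpyth] at hkey
      linarith only [hkey, h1, h2]
    have h3 := mul_lt_mul_of_pos_right hκη hη
    have h4 := mul_pos hSpos hη
    linarith only [hκη2, h3, h4]
  -- apply key inequality to the actual error
  have hvalΔ : L (θs + Δ) + lam * Φ (θs + Δ) ≤ L θs + lam * Φ θs := by
    have h := hθhat θs
    have heq : θs + Δ = θhat := by rw [hΔdef]; abel
    rw [heq]; exact h
  have hkey := key Δ hvalΔ hΔle
  set u := ‖(Submodule.orthogonalProjection Mbarstar Δ : Ω)‖ with hu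
  set v := ‖(Submodule.orthogonalProjection Mbarstarᗮ Δ : Ω)‖ with hv
  have hu0 : 0 ≤ u := norm_nonneg _
  have hv0 : 0 ≤ v := norm_nonneg _
  have hpyth : u ^ 2 + v ^ 2 = ‖Δ‖ ^ 2 := by
    have h := Submodule.norm_sq_eq_add_norm_sq_projection Δ Mbarstar
    simp only [Submodule.coe_norm] at h
    exact h.symm
  have huΔ : u ≤ ‖Δ‖ := hproj_le _ _
  have hΔ3 : ‖Δ‖ ≤ 3 * lam * Ψ / κ := by
    rcases eq_or_lt_of_le (norm_nonneg Δ) with h0 | h0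
    · rw [← h0]
      exact le_of_lt (div_pos (mul_pos (mul_pos (by norm_num) hlampos) hΨpos) hκpos)
    · rw [le_div_iff₀ hκpos]
      have hkey2 := hkey
      rw [show κ * (u ^ 2 + v ^ 2) = κ * (u ^ 2 + v ^ 2) from rfl] at hkey2
      have hsq2 : u ^ 2 ≤ ‖Δ‖ ^ 2 := by nlinarith only [huΔ, hu0]
      have hΨu : Ψ * u ≤ Ψ * ‖Δ‖ := mul_le_mul_of_nonneg_left huΔ hΨpos.le
      have h1 := mul_le_mul_of_nonneg_left hsq2 (by positivity : (0:ℝ) ≤ κ / 2)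
      have h2 := mul_le_mul_of_nonneg_left hΨu (by positivity : (0:ℝ) ≤ 3 * lam / 2)
      nlinarith only [hkey2, hpyth, h1, h2, h0, hκpos]
  have hv2 : 8 * κ ^ 2 * v ^ 2 ≤ 9 * (lam * Ψ) ^ 2 := by
    linarith only [mul_le_mul_of_nonneg_left hkey (by positivity : (0:ℝ) ≤ 8 * κ),
      sq_nonneg (2 * κ * u - 3 * (lam * Ψ))]
  -- arithmetic with √2
  set s2 := Real.sqrt 2 with hs2def
  have hs2 : s2 ^ 2 = 2 := Real.sq_sqrt (by norm_num)
  have hs2pos : 0 < s2 := Real.sqrt_pos.mpr (by norm_num)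
  have hs2one : 1 ≤ s2 := by nlinarith only [hs2, hs2pos]
  have hrw : 3 / (2 * s2) * (3 + s2) = 3 / 2 + 9 / 4 * s2 := by
    rw [div_mul_eq_mul_div, div_eq_iff (by positivity : (2:ℝ) * s2 ≠ 0)]
    linear_combination (-9/2) * hs2
  have hcgt : c > 3 / 2 + 9 / 4 * s2 := by rw [← hrw]; exact hc
  have hc'gt : c' > 3 * s2 / 4 := by rw [hc']; linarith only [hcgt]
  have hc'pos : 0 < c' := lt_trans (by positivity) hc'gt
  have hξpos : 0 < ξ := by
    rw [hξ]
    exact mul_pos (mul_pos (div_pos hc'pos hκpos) hlampos) hΨpos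
  have hc'sq : c' ^ 2 > 9 / 8 := by nlinarith only [hc'gt, hs2, hs2pos]
  have hξκ : κ * ξ = c' * (lam * Ψ) := by
    rw [hξ]; field_simp
  constructor
  · intro F hF hFne
    have hsplit : θhat = θs + Δ := by rw [hΔdef]; abel
    have hadd : (Submodule.orthogonalProjection F θhat : Ω)
        = (Submodule.orthogonalProjection F θs : Ω) + (Submodule.orthogonalProjection F Δ : Ω) := by
      rw [hsplit, map_add]; rfl
    have htri : ‖(Submodule.orthogonalProjection F θs : Ω)‖
        ≤ ‖(Submodule.orthogonalProjection F θhat : Ω)‖ + ‖(Submodule.orthogonalProjection F Δ : Ω)‖ := by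
      rw [hadd]
      calc ‖(Submodule.orthogonalProjection F θs : Ω)‖
          = ‖((Submodule.orthogonalProjection F θs : Ω) + (Submodule.orthogonalProjection F Δ : Ω))
              + (-(Submodule.orthogonalProjection F Δ : Ω))‖ := by rw [add_neg_cancel_right]
        _ ≤ ‖(Submodule.orthogonalProjection F θs : Ω) + (Submodule.orthogonalProjection F Δ : Ω)‖
              + ‖-(Submodule.orthogonalProjection F Δ : Ω)‖ := norm_add_le _ _
        _ = _ := by rw [norm_neg]
    have hΔF : ‖(Submodule.orthogonalProjection F Δ : Ω)‖ ≤ ‖Δ‖ := hproj_le F Δ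
    have hbm := hbetamin F hF hFne
    rw [hξ]
    have hc3 : c - 3 ≥ c' := by rw [hc']; linarith only [hs2one]
    have hgap : (c / κ) * lam * Ψ - 3 * lam * Ψ / κ - (c' / κ) * lam * Ψ ≥ 0 := by
      have h1 : (c / κ) * lam * Ψ - 3 * lam * Ψ / κ - (c' / κ) * lam * Ψ
          = ((c - 3 - c') / κ) * (lam * Ψ) := by ring
      rw [h1]
      exact mul_nonneg (div_nonneg (by linarith only [hc3]) hκpos.le) hSpos.le
    linarith only [htri, hΔF, hbm, hΔ3, hgap]
  · have hsplit : θhat = θs + Δ := by rw [hΔdef]; abel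
    have h0 : Submodule.orthogonalProjection Mbarstarᗮ θs = 0 :=
      Submodule.orthogonalProjectionOnto_apply_of_mem_orthogonal
        (Mbarstar.le_orthogonal_orthogonal (hMM hθs))
    have hQ : Submodule.orthogonalProjection Mbarstarᗮ θhat = Submodule.orthogonalProjection Mbarstarᗮ Δ := by
      rw [hsplit, map_add, h0, zero_add]
    rw [hQ]
    show v < ξ
    have hξκ2 : (κ * ξ) ^ 2 = (c' * (lam * Ψ)) ^ 2 := by rw [hξκ]
    have hvsq : v ^ 2 < ξ ^ 2 := by
      nlinarith only [hv2, hξκ2, hc'sq, mul_pos hSpos hSpos, mul_pos hκpos hκpos]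
    nlinarith only [hvsq, hv0, hξpos]
end
end
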